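/- The bar complex CB_*(C) is a differential graded Lie(C)-comodule: for every n ≥ 0, the diagonal coaction commutes with the bar differential, i.e. ρ_{n+1} ∘ d^{CB}_n = (d^{CB}_n ⊗ id_C) ∘ ρ_n as maps C^{⊗n} → C^{⊗(n+1)} ⊗ C. -/

import Mathlib

open TensorProduct PiTensorProduct

noncomputable section

variable (k : Type) [Field k] (C : Type) [AddCommGroup C] [Module k C]

abbrev tpow (n : ℕ) : Type := ⨂[k] (_ : Fin n), C

variable {k C}

def tcast {m n : ℕ} (h : m = n) : tpow k C m ≃ₗ[k] tpow k C n :=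
  PiTensorProduct.reindex k (fun _ => C) (finCongr h)

def mulE (m n : ℕ) : (tpow k C m ⊗[k] tpow k C n) ≃ₗ[k] tpow k C (m + n) :=
  (PiTensorProduct.tmulEquiv k C).trans
    (PiTensorProduct.reindex k (fun _ => C) finSumFinEquiv)

def eC : C ≃ₗ[k] tpow k C 1 :=
  (PiTensorProduct.subsingletonEquiv (R := k) (s := fun _ : Fin 1 => C) (0 : Fin 1)).symm

def permAct {n : ℕ} (σ : Equiv.Perm (Fin n)) : tpow k C n ≃ₗ[k] tpow k C n :=
  PiTensorProduct.reindex k (fun _ => C) σ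

def tauPow (n : ℕ) (j : ℤ) : tpow k C n ≃ₗ[k] tpow k C n :=
  permAct ((finRotate n) ^ j)

def eps (n : ℕ) : tpow k C n →ₗ[k] tpow k C n :=
  ∑ σ : Equiv.Perm (Fin n),
    ((Equiv.Perm.sign σ : ℤ) : k) • (permAct σ).toLinearMap

variable (D : C →ₗ[k] C ⊗[k] C)

/-- Apply `D : C → C ⊗ C` to the factor in position `a` (0-indexed) of `C^{⊗(a+1+b)}`,
leaving the two outputs in positions `a`, `a+1`. -/
def insertAt (a b : ℕ) : tpow k C (a + 1 + b) →ₗ[k] tpow k C (a + 1 + b + 1) :=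
  (tcast (show a + 1 + (1 + b) = a + 1 + b + 1 by omega)).toLinearMap ∘ₗ
  (mulE (a + 1) (1 + b)).toLinearMap ∘ₗ
  (TensorProduct.map (mulE a 1).toLinearMap (mulE 1 b).toLinearMap) ∘ₗ
  (TensorProduct.map (TensorProduct.map LinearMap.id eC.toLinearMap)
      (TensorProduct.map eC.toLinearMap LinearMap.id)) ∘ₗ
  (TensorProduct.assoc k (tpow k C a ⊗[k] C) C (tpow k C b)).toLinearMap ∘ₗ
  (TensorProduct.map (TensorProduct.assoc k (tpow k C a) C C).symm.toLinearMap LinearMap.id) ∘ₗ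
  (TensorProduct.map (TensorProduct.map LinearMap.id D) LinearMap.id) ∘ₗ
  (TensorProduct.map (TensorProduct.map LinearMap.id eC.symm.toLinearMap) LinearMap.id) ∘ₗ
  (TensorProduct.map (mulE a 1).symm.toLinearMap LinearMap.id) ∘ₗ
  (mulE (a + 1) b).symm.toLinearMap

/-- `∂_j = id^{⊗j} ⊗ D ⊗ id^{⊗(n-1-j)} : C^{⊗n} → C^{⊗(n+1)}`. -/
def del {n : ℕ} (j : Fin n) : tpow k C n →ₗ[k] tpow k C (n + 1) :=
  (tcast (show (j : ℕ) + 1 + (n - 1 - (j : ℕ)) + 1 = n + 1 by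
      have := j.isLt; omega)).toLinearMap ∘ₗ
  insertAt D (j : ℕ) (n - 1 - (j : ℕ)) ∘ₗ
  (tcast (show n = (j : ℕ) + 1 + (n - 1 - (j : ℕ)) by
      have := j.isLt; omega)).toLinearMap

/-- The bar differential `d^{CB}_n = Σ_{j=0}^{n-1} (-1)^j ∂_j`. -/
def dCB (n : ℕ) : tpow k C n →ₗ[k] tpow k C (n + 1) :=
  ∑ j : Fin n, ((-1 : k) ^ (j : ℕ)) • del D j

/-- `∂_0`, defined as `0` when `n = 0`. -/
def del0 (n : ℕ) : tpow k C n →ₗ[k] tpow k C (n + 1) :=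
  if h : 0 < n then del D (⟨0, h⟩ : Fin n) else 0

/-- The Hochschild differential `d^{CH}_n = d^{CB}_n + (-1)^n τ_{n+1}⁻¹ ∘ ∂_0`. -/
def dCH (n : ℕ) : tpow k C n →ₗ[k] tpow k C (n + 1) :=
  dCB D n + ((-1 : k) ^ n) • ((tauPow (n + 1) (-1)).toLinearMap ∘ₗ del0 D n)

/-- Apply `D` at position `a` of `C^{⊗(a+1+b)}` and move the second output leg to the very end,
yielding a map `C^{⊗(a+1+b)} → C^{⊗(a+1+b)} ⊗ C`. -/
def coactAt (a b : ℕ) : tpow k C (a + 1 + b) →ₗ[k] tpow k C (a + 1 + b) ⊗[k] C :=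
  (TensorProduct.map (mulE (a + 1) b).toLinearMap LinearMap.id) ∘ₗ
  (TensorProduct.map (TensorProduct.map (mulE a 1).toLinearMap LinearMap.id) LinearMap.id) ∘ₗ
  (TensorProduct.map (TensorProduct.map (TensorProduct.map LinearMap.id eC.toLinearMap)
      LinearMap.id) LinearMap.id) ∘ₗ
  (TensorProduct.assoc k (tpow k C a ⊗[k] C) (tpow k C b) C).symm.toLinearMap ∘ₗ
  (TensorProduct.map LinearMap.id (TensorProduct.comm k C (tpow k C b)).toLinearMap) ∘ₗ
  (TensorProduct.assoc k (tpow k C a ⊗[k] C) C (tpow k C b)).toLinearMap ∘ₗ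
  (TensorProduct.map (TensorProduct.assoc k (tpow k C a) C C).symm.toLinearMap LinearMap.id) ∘ₗ
  (TensorProduct.map (TensorProduct.map LinearMap.id D) LinearMap.id) ∘ₗ
  (TensorProduct.map (TensorProduct.map LinearMap.id eC.symm.toLinearMap) LinearMap.id) ∘ₗ
  (TensorProduct.map (mulE a 1).symm.toLinearMap LinearMap.id) ∘ₗ
  (mulE (a + 1) b).symm.toLinearMap

/-- The diagonal coaction `ρ_n : C^{⊗n} → C^{⊗n} ⊗ C`,
`ρ_n(x¹⊗⋯⊗xⁿ) = Σ_j (x¹⊗⋯⊗(x^j)_{[1]}⊗⋯⊗xⁿ) ⊗ (x^j)_{[2]}` where `D x = x_{[1]} ⊗ x_{[2]}`. -/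
def coact (n : ℕ) : tpow k C n →ₗ[k] tpow k C n ⊗[k] C :=
  ∑ j : Fin n,
    (TensorProduct.map
      (tcast (show (j : ℕ) + 1 + (n - 1 - (j : ℕ)) = n by have := j.isLt; omega)).toLinearMap
      LinearMap.id) ∘ₗ
    coactAt D (j : ℕ) (n - 1 - (j : ℕ)) ∘ₗ
    (tcast (show n = (j : ℕ) + 1 + (n - 1 - (j : ℕ)) by have := j.isLt; omega)).toLinearMap

/-- The diagonal coaction with codomain `C^{⊗(n+1)}`. -/
def coactE (n : ℕ) : tpow k C n →ₗ[k] tpow k C (n + 1) :=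
  (mulE n 1).toLinearMap ∘ₗ (TensorProduct.map LinearMap.id eC.toLinearMap) ∘ₗ coact D n

/-- The Chevalley–Eilenberg summand `∂_j = ρ_{j+1} ⊗ id^{⊗(n-j-1)}` for `j : Fin n`. -/
def CEdel {n : ℕ} (j : Fin n) : tpow k C n →ₗ[k] tpow k C (n + 1) :=
  (tcast (show (j : ℕ) + 1 + 1 + (n - ((j : ℕ) + 1)) = n + 1 by
      have := j.isLt; omega)).toLinearMap ∘ₗ
  (mulE ((j : ℕ) + 1 + 1) (n - ((j : ℕ) + 1))).toLinearMap ∘ₗ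
  (TensorProduct.map (coactE D ((j : ℕ) + 1)) LinearMap.id) ∘ₗ
  (mulE ((j : ℕ) + 1) (n - ((j : ℕ) + 1))).symm.toLinearMap ∘ₗ
  (tcast (show n = (j : ℕ) + 1 + (n - ((j : ℕ) + 1)) by have := j.isLt; omega)).toLinearMap

/-- The Chevalley–Eilenberg–Leibniz differential
`d^{CE}_n = Σ_{j=1}^n (-1)^{j-1} (ρ_j ⊗ id^{⊗(n-j)})`. -/
def dCE (n : ℕ) : tpow k C n →ₗ[k] tpow k C (n + 1) :=
  ∑ j : Fin n, ((-1 : k) ^ (j : ℕ)) • CEdel D j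

/-- Extend `f : C^{⊗n} → C^{⊗m}` to `f ⊗ id : C^{⊗(n+1)} → C^{⊗(m+1)}`
acting on the first factors. -/
def extLast {n m : ℕ} (f : tpow k C n →ₗ[k] tpow k C m) :
    tpow k C (n + 1) →ₗ[k] tpow k C (m + 1) :=
  (mulE m 1).toLinearMap ∘ₗ (TensorProduct.map f LinearMap.id) ∘ₗ (mulE n 1).symm.toLinearMap

/-- Apply `f` to the `m` middle factors (positions `p+1,…,p+m`) of `C^{⊗(p+m+r)}`. -/
def midOp (p m r : ℕ) (f : tpow k C m →ₗ[k] tpow k C m) :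
    tpow k C (p + m + r) →ₗ[k] tpow k C (p + m + r) :=
  (mulE (p + m) r).toLinearMap ∘ₗ
  (TensorProduct.map
    ((mulE p m).toLinearMap ∘ₗ (TensorProduct.map LinearMap.id f) ∘ₗ
      (mulE p m).symm.toLinearMap)
    LinearMap.id) ∘ₗ
  (mulE (p + m) r).symm.toLinearMap

/-- `ε_n ⊗ id : C^{⊗(n+1)} → C^{⊗(n+1)}`, antisymmetrizing the first `n` factors. -/
def epsHead (n : ℕ) : tpow k C (n + 1) →ₗ[k] tpow k C (n + 1) :=
  ∑ σ : Equiv.Perm (Fin n),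
    ((Equiv.Perm.sign σ : ℤ) : k) •
      (permAct (finSumFinEquiv.permCongr (Equiv.sumCongr σ (Equiv.refl (Fin 1))))).toLinearMap

/-- `id ⊗ ε_m : C^{⊗(m+1)} → C^{⊗(m+1)}`, antisymmetrizing the last `m` factors. -/
def epsTail (m : ℕ) : tpow k C (m + 1) →ₗ[k] tpow k C (m + 1) :=
  ∑ σ : Equiv.Perm (Fin m),
    ((Equiv.Perm.sign σ : ℤ) : k) •
      (permAct ((finCongr (show 1 + m = m + 1 by omega)).permCongr
        (finSumFinEquiv.permCongr (Equiv.sumCongr (Equiv.refl (Fin 1)) σ)))).toLinearMap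

/-- The permutation of `Fin (n+1)` which moves the factor in position `j` to the end,
shifting the later ones down (as a reindexing function, it is the cycle rotating
positions `j,…,n`). -/
def moveEndPerm (n : ℕ) (j : Fin (n + 1)) : Equiv.Perm (Fin (n + 1)) :=
  (finCongr (show (j : ℕ) + (n + 1 - (j : ℕ)) = n + 1 by have := j.isLt; omega)).permCongr
    (finSumFinEquiv.permCongr
      (Equiv.sumCongr (Equiv.refl (Fin (j : ℕ))) (finRotate (n + 1 - (j : ℕ)))))

/-- The contracting homotopy `h_{n+1} : C^{⊗(n+1)} → C^{⊗n} ⊗ C`,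
`h(x¹⊗⋯⊗x^{n+1}) = Σ_j (-1)^j (x¹⊗⋯⊗\hat{x^j}⊗⋯⊗x^{n+1}) ⊗ x^j`. -/
def hBar (n : ℕ) : tpow k C (n + 1) →ₗ[k] tpow k C n ⊗[k] C :=
  ∑ j : Fin (n + 1), ((-1 : k) ^ ((j : ℕ) + 1)) •
    ((TensorProduct.map LinearMap.id eC.symm.toLinearMap) ∘ₗ
      (mulE n 1).symm.toLinearMap ∘ₗ (permAct (moveEndPerm n j)⁻¹).toLinearMap)

/-- The contracting homotopy as an operator on `C^{⊗(n+1)}`. -/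
def hOp (n : ℕ) : tpow k C (n + 1) →ₗ[k] tpow k C (n + 1) :=
  ∑ j : Fin (n + 1), ((-1 : k) ^ ((j : ℕ) + 1)) • (permAct (moveEndPerm n j)⁻¹).toLinearMap

/-- The norm operator `N_n = Σ_{j=0}^{n-1} (-1)^{(n-1)j} τ_n^j`. -/
def Nop (n : ℕ) : tpow k C n →ₗ[k] tpow k C n :=
  ∑ j : Fin n, ((-1 : k) ^ ((n - 1) * (j : ℕ))) • (tauPow n (j : ℕ)).toLinearMap

/-- `t_n = id - (-1)^{n-1} τ_n⁻¹`. -/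
def tOp (n : ℕ) : tpow k C n →ₗ[k] tpow k C n :=
  LinearMap.id - ((-1 : k) ^ (n - 1)) • (tauPow n (-1)).toLinearMap


/-- `i_n = (-1)^{n+1} · id`. -/
def iCE (n : ℕ) : tpow k C n →ₗ[k] tpow k C n :=
  ((-1 : k) ^ (n + 1)) • LinearMap.id

end

/-- The cobracket `δ = (id - τ) ∘ Δ` of the Lie coalgebra `Lie(C)`. -/
noncomputable def lieD {k : Type} [Field k] {C : Type} [AddCommGroup C] [Module k C]
    (Δ : C →ₗ[k] C ⊗[k] C) : C →ₗ[k] C ⊗[k] C :=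
  (LinearMap.id - (TensorProduct.comm k C C).toLinearMap) ∘ₗ Δ

/-!
The diagonal coaction is a sum `ρ_n = Σ_j ρ^j` of coactions on the single tensor factor `j`,
and `d^{CB}_n = Σ_i (-1)^i ∂_i`, so it suffices that `ρ_{n+1} ∘ ∂_i = (∂_i ⊗ id) ∘ ρ_n` for
each `i`. A slot of `ρ_{n+1}` other than the two factors created by `∂_i` acts on a factor
untouched by `∂_i`, and gives `(∂_i ⊗ id) ∘ ρ^q` for the corresponding `q ≠ i`. The two created
slots together apply the diagonal coaction of `C ⊗ C` to `Δ(x^i)`; by coassociativity this is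
`(Δ ⊗ id)(δ x^i)`, i.e. `Δ` is a morphism of `Lie(C)`-comodules, and that is the remaining
term `(∂_i ⊗ id) ∘ ρ^i`.
-/

open Function

lemma Fin.append_apply_eq_dite {α : Type*} {m n : ℕ} (u : Fin m → α) (v : Fin n → α)
    (t : Fin (m + n)) :
    Fin.append u v t = if h : (t : ℕ) < m then u ⟨t, h⟩ else v ⟨t - m, by omega⟩ := by
  refine Fin.addCases (fun i => ?_) (fun i => ?_) t <;> simp

lemma Fin.insertNth_succ_update_apply {α : Type*} {n : ℕ} (i : Fin n) (f : Fin n → α) (y z : α)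
    (t : Fin (n + 1)) :
    Fin.insertNth (α := fun _ => α) i.succ z (update f i y) t =
      if h : (t : ℕ) < i then f ⟨t, by omega⟩
      else if (t : ℕ) = i then y
      else if (t : ℕ) = i + 1 then z
      else f ⟨t - 1, by omega⟩ := by
  refine Fin.succAboveCases i.succ ?_ (fun q => ?_) t
  · simp
  · rw [Fin.insertNth_apply_succAbove, update_apply]
    unfold Fin.succAbove
    split_ifs <;> simp only [Fin.ext_iff] at * <;>
      first
        | rfl
        | (congr 1; ext; simp; omega)
        | (exfalso; simp only [Fin.lt_def, Fin.val_castSucc, Fin.val_succ] at *; omega)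

section

variable {k C : Type} [Field k] [AddCommGroup C] [Module k C]

lemma tcast_tprod {m n : ℕ} (h : m = n) (f : Fin m → C) :
    tcast (k := k) h (tprod k f) = tprod k (f ∘ Fin.cast h.symm) :=
  reindex_tprod _ _

lemma mulE_tprod (m n : ℕ) (f : Fin m → C) (g : Fin n → C) :
    mulE (k := k) m n (tprod k f ⊗ₜ tprod k g) = tprod k (Fin.append f g) := by
  rw [mulE, LinearEquiv.trans_apply, tmulEquiv_apply, reindex_tprod]
  congr 1
  ext t
  refine Fin.addCases (fun i => ?_) (fun i => ?_) t <;> simp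

lemma mulE_symm_tprod (m n : ℕ) (f : Fin (m + n) → C) :
    (mulE (k := k) m n).symm (tprod k f)
      = tprod k (f ∘ Fin.castAdd n) ⊗ₜ tprod k (f ∘ Fin.natAdd m) := by
  rw [LinearEquiv.symm_apply_eq, mulE_tprod, comp_def, comp_def, Fin.append_castAdd_natAdd]

lemma eC_apply (c : C) : eC (k := k) c = tprod k (fun _ : Fin 1 => c) := by
  rw [eC, LinearEquiv.symm_apply_eq, subsingletonEquiv_apply_tprod]

lemma eC_symm_tprod (f : Fin 1 → C) : (eC (k := k)).symm (tprod k f) = f 0 :=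
  subsingletonEquiv_apply_tprod _ _

def insertPair {n : ℕ} (i : Fin n) (f : Fin n → C) : C ⊗[k] C →ₗ[k] tpow k C (n + 1) :=
  have update_zero (z : C) (g : Fin n → C) : Fin.insertNth i.succ z g =
      update (Fin.insertNth (α := fun _ => C) i.succ 0 g) i.succ z :=
    (Fin.update_insertNth _ _ _ _).symm
  TensorProduct.lift <| LinearMap.mk₂ k
    (fun y z => tprod k (Fin.insertNth (α := fun _ => C) i.succ z (update f i y)))
    (fun y₁ y₂ z => by simp only [Fin.insertNth_update, MultilinearMap.map_update_add])
    (fun c y z => by simp only [Fin.insertNth_update, MultilinearMap.map_update_smul])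
    (fun y z₁ z₂ => by
      rw [update_zero z₁, update_zero z₂, update_zero (z₁ + z₂), MultilinearMap.map_update_add])
    (fun c y z => by
      rw [update_zero z, update_zero (c • z), MultilinearMap.map_update_smul])

@[simp] lemma insertPair_tmul {n : ℕ} (i : Fin n) (f : Fin n → C) (y z : C) :
    insertPair i f (y ⊗ₜ z)
      = tprod k (Fin.insertNth (α := fun _ => C) i.succ z (update f i y)) :=
  rfl

lemma insertPair_update_self {n : ℕ} (i : Fin n) (f : Fin n → C) (u : C) :
    insertPair (k := k) i (update f i u) = insertPair i f :=
  TensorProduct.ext' fun y z => by simp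

def replaceAt {n : ℕ} (f : Fin n → C) (j : Fin n) : C ⊗[k] C →ₗ[k] tpow k C n ⊗[k] C :=
  LinearMap.rTensor C ((PiTensorProduct.tprod k).toLinearMap f j)

@[simp] lemma replaceAt_tmul {n : ℕ} (f : Fin n → C) (j : Fin n) (u c : C) :
    replaceAt (k := k) f j (u ⊗ₜ c) = tprod k (update f j u) ⊗ₜ c := by
  simp [replaceAt]

lemma del_tprod (D : C →ₗ[k] C ⊗[k] C) {n : ℕ} (i : Fin n) (f : Fin n → C) :
    del D i (tprod k f) = insertPair i f (D (f i)) := by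
  simp only [del, insertAt, LinearMap.comp_apply, LinearEquiv.coe_coe, tcast_tprod,
    mulE_symm_tprod, map_tmul, LinearMap.id_coe, id_eq, eC_symm_tprod, comp_apply]
  rw [show Fin.cast _ (Fin.castAdd _ (Fin.natAdd (i : ℕ) (0 : Fin 1))) = i from Fin.ext (by simp)]
  generalize D (f i) = w
  induction w using TensorProduct.induction_on with
  | zero => simp
  | add w₁ w₂ h₁ h₂ => simp only [tmul_add, add_tmul, map_add, h₁, h₂]
  | tmul y z =>
    simp only [TensorProduct.assoc_symm_tmul, TensorProduct.assoc_tmul, map_tmul,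
      LinearMap.id_coe, id_eq, LinearEquiv.coe_coe, eC_apply, mulE_tprod, tcast_tprod,
      insertPair_tmul]
    congr 1
    funext t
    rw [Fin.insertNth_succ_update_apply]
    simp only [comp_apply, Fin.append_apply_eq_dite, Fin.val_cast]
    split_ifs <;> first | rfl | omega | (congr 1; ext; simp; omega)

def coactSlot (δ : C →ₗ[k] C ⊗[k] C) {n : ℕ} (j : Fin n) :
    tpow k C n →ₗ[k] tpow k C n ⊗[k] C :=
  (TensorProduct.map
    (tcast (show (j : ℕ) + 1 + (n - 1 - (j : ℕ)) = n by have := j.isLt; omega)).toLinearMap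
    LinearMap.id) ∘ₗ
  coactAt δ (j : ℕ) (n - 1 - (j : ℕ)) ∘ₗ
  (tcast (show n = (j : ℕ) + 1 + (n - 1 - (j : ℕ)) by have := j.isLt; omega)).toLinearMap

lemma coact_eq_sum_coactSlot (δ : C →ₗ[k] C ⊗[k] C) (n : ℕ) :
    coact δ n = ∑ j : Fin n, coactSlot δ j :=
  rfl

lemma coactSlot_tprod (δ : C →ₗ[k] C ⊗[k] C) {n : ℕ} (j : Fin n) (f : Fin n → C) :
    coactSlot δ j (tprod k f) = replaceAt f j (δ (f j)) := by
  simp only [coactSlot, coactAt, LinearMap.comp_apply, LinearEquiv.coe_coe, tcast_tprod,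
    mulE_symm_tprod, map_tmul, LinearMap.id_coe, id_eq, eC_symm_tprod, comp_apply]
  rw [show Fin.cast _ (Fin.castAdd _ (Fin.natAdd (j : ℕ) (0 : Fin 1))) = j from Fin.ext (by simp)]
  generalize δ (f j) = w
  induction w using TensorProduct.induction_on with
  | zero => simp
  | add w₁ w₂ h₁ h₂ => simp only [tmul_add, add_tmul, map_add, h₁, h₂]
  | tmul u c =>
    simp only [TensorProduct.assoc_symm_tmul, TensorProduct.assoc_tmul, TensorProduct.comm_tmul,
      map_tmul, LinearMap.id_coe, id_eq, LinearEquiv.coe_coe, eC_apply, mulE_tprod, tcast_tprod,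
      replaceAt_tmul]
    congr 2
    funext t
    simp only [comp_apply, Fin.append_apply_eq_dite, Fin.val_cast, update_apply, Fin.ext_iff]
    split_ifs <;> first | rfl | omega | (congr 1; ext; simp; omega)
/-- The diagonal coaction on `C ⊗ C`:
`u ⊗ v ↦ Σ (u_{[1]} ⊗ v) ⊗ u_{[2]} + Σ (u ⊗ v_{[1]}) ⊗ v_{[2]}`. -/
def tmulCoact (δ : C →ₗ[k] C ⊗[k] C) : C ⊗[k] C →ₗ[k] (C ⊗[k] C) ⊗[k] C :=
  (TensorProduct.rightComm k C C C).toLinearMap ∘ₗ δ.rTensor C +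
    (TensorProduct.assoc k C C C).symm.toLinearMap ∘ₗ δ.lTensor C

lemma tmulCoact_comp_comul (Δ : C →ₗ[k] C ⊗[k] C)
    (hcoassoc : (TensorProduct.assoc k C C C).toLinearMap ∘ₗ
        (TensorProduct.map Δ LinearMap.id) ∘ₗ Δ
      = (TensorProduct.map LinearMap.id Δ) ∘ₗ Δ) :
    tmulCoact (lieD Δ) ∘ₗ Δ = Δ.rTensor C ∘ₗ lieD Δ := by
  have hlieD : lieD Δ = Δ - (TensorProduct.comm k C C).toLinearMap ∘ₗ Δ := by
    rw [lieD, LinearMap.sub_comp, LinearMap.id_comp]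
  have hα : ∀ t, (TensorProduct.assoc k C C C).symm
      ((TensorProduct.comm k C C).toLinearMap.lTensor C (TensorProduct.assoc k C C C t))
        = TensorProduct.rightComm k C C C t :=
    fun t => by rw [TensorProduct.rightComm_def]; rfl
  have hτ : ∀ t,
      TensorProduct.rightComm k C C C ((TensorProduct.comm k C C).toLinearMap.rTensor C t)
      = TensorProduct.comm k C (C ⊗[k] C) (TensorProduct.assoc k C C C t) :=
    LinearMap.congr_fun (TensorProduct.ext_threefold
      (g := (TensorProduct.rightComm k C C C).toLinearMap ∘ₗ
        (TensorProduct.comm k C C).toLinearMap.rTensor C)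
      (h := (TensorProduct.comm k C (C ⊗[k] C)).toLinearMap ∘ₗ
        (TensorProduct.assoc k C C C).toLinearMap) fun _ _ _ => rfl)
  ext x
  have hx : Δ.lTensor C (Δ x) = TensorProduct.assoc k C C C (Δ.rTensor C (Δ x)) :=
    (LinearMap.congr_fun hcoassoc x).symm
  simp only [tmulCoact, hlieD, LinearMap.rTensor_sub, LinearMap.lTensor_sub,
    LinearMap.rTensor_comp, LinearMap.lTensor_comp, LinearMap.comp_apply, LinearMap.add_apply,
    LinearMap.sub_apply, map_sub, LinearEquiv.coe_coe, LinearMap.rTensor_comm, hx, hα, hτ,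
    LinearEquiv.symm_apply_apply]
  abel

variable (D δ : C →ₗ[k] C ⊗[k] C) {n : ℕ}

lemma coactSlot_succAbove_comp_del {i q : Fin n} (hqi : q ≠ i) :
    coactSlot δ (i.succ.succAbove q) ∘ₗ del D i = (del D i).rTensor C ∘ₗ coactSlot δ q := by
  refine PiTensorProduct.ext (MultilinearMap.ext fun f => ?_)
  simp only [LinearMap.compMultilinearMap_apply, LinearMap.comp_apply, del_tprod,
    coactSlot_tprod]
  obtain ⟨S, hS⟩ := TensorProduct.exists_finset (δ (f q))
  have hw : ∀ w, coactSlot δ (i.succ.succAbove q) (insertPair i f w)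
      = ∑ b ∈ S, insertPair i (update f q b.1) w ⊗ₜ b.2 := by
    intro w
    induction w using TensorProduct.induction_on with
    | zero => simp
    | add w₁ w₂ h₁ h₂ => simp only [map_add, h₁, h₂, add_tmul, Finset.sum_add_distrib]
    | tmul y z =>
      simp only [insertPair_tmul, coactSlot_tprod, Fin.insertNth_apply_succAbove,
        update_of_ne hqi, hS, map_sum, replaceAt_tmul, ← Fin.insertNth_update, update_comm hqi]
  rw [hw, hS]
  simp only [map_sum, replaceAt_tmul, LinearMap.rTensor_tmul, del_tprod, update_of_ne hqi.symm]

lemma rTensor_insertPair_comp_tmulCoact (i : Fin n) (f : Fin n → C) :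
    (insertPair (k := k) i f).rTensor C ∘ₗ tmulCoact δ
      = coactSlot δ i.castSucc ∘ₗ insertPair i f + coactSlot δ i.succ ∘ₗ insertPair i f := by
  refine TensorProduct.ext' fun y z => ?_
  simp only [tmulCoact, LinearMap.comp_apply, LinearMap.add_apply, insertPair_tmul,
    coactSlot_tprod, map_add]
  rw [← Fin.succAbove_succ_self, Fin.insertNth_apply_same, Fin.insertNth_apply_succAbove,
    update_self, LinearMap.rTensor_tmul, LinearMap.lTensor_tmul]
  congr 1
  · generalize δ y = e
    induction e using TensorProduct.induction_on with
    | zero => simp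
    | add e₁ e₂ h₁ h₂ => simp only [add_tmul, map_add, h₁, h₂]
    | tmul u c =>
      simp only [LinearEquiv.coe_coe, TensorProduct.rightComm_tmul, LinearMap.rTensor_tmul,
        insertPair_tmul, replaceAt_tmul, ← Fin.insertNth_update, update_idem]
  · generalize δ z = e
    induction e using TensorProduct.induction_on with
    | zero => simp
    | add e₁ e₂ h₁ h₂ => simp only [tmul_add, map_add, h₁, h₂]
    | tmul u c =>
      simp only [LinearEquiv.coe_coe, TensorProduct.assoc_symm_tmul, LinearMap.rTensor_tmul,
        insertPair_tmul, replaceAt_tmul, Fin.update_insertNth]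

lemma rTensor_del_comp_replaceAt (i : Fin n) (f : Fin n → C) :
    (del D i).rTensor C ∘ₗ replaceAt f i = (insertPair i f).rTensor C ∘ₗ D.rTensor C :=
  TensorProduct.ext' fun u c => by
    simp [del_tprod, insertPair_update_self]

lemma coactSlot_castSucc_add_succ_comp_del (hD : tmulCoact δ ∘ₗ D = D.rTensor C ∘ₗ δ)
    (i : Fin n) :
    coactSlot δ i.castSucc ∘ₗ del D i + coactSlot δ i.succ ∘ₗ del D i
      = (del D i).rTensor C ∘ₗ coactSlot δ i := by
  refine PiTensorProduct.ext (MultilinearMap.ext fun f => ?_)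
  have hpair := LinearMap.congr_fun (rTensor_insertPair_comp_tmulCoact δ i f) (D (f i))
  have hrepl := LinearMap.congr_fun (rTensor_del_comp_replaceAt D i f) (δ (f i))
  simp only [LinearMap.compMultilinearMap_apply, LinearMap.comp_apply, LinearMap.add_apply,
    del_tprod, coactSlot_tprod] at hpair hrepl ⊢
  rw [← hpair, hrepl, ← LinearMap.comp_apply (tmulCoact δ), hD, LinearMap.comp_apply]

lemma coact_comp_del (hD : tmulCoact δ ∘ₗ D = D.rTensor C ∘ₗ δ) (i : Fin n) :
    coact δ (n + 1) ∘ₗ del D i = (del D i).rTensor C ∘ₗ coact δ n := by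
  have sum_comp : (∑ j, coactSlot δ j) ∘ₗ del D i = ∑ j, coactSlot δ j ∘ₗ del D i :=
    map_sum (LinearMap.lcomp k _ (del D i)) _ _
  have comp_sum : (del D i).rTensor C ∘ₗ (∑ q, coactSlot δ q)
      = ∑ q, (del D i).rTensor C ∘ₗ coactSlot δ q :=
    map_sum (LinearMap.llcomp k _ _ _ ((del D i).rTensor C)) _ _
  rw [coact_eq_sum_coactSlot, coact_eq_sum_coactSlot, sum_comp, comp_sum,
    Fin.sum_univ_succAbove _ i.succ, ← Finset.add_sum_erase _ _ (Finset.mem_univ i),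
    Fin.succAbove_succ_self, ← add_assoc, add_comm (coactSlot δ i.succ ∘ₗ del D i),
    coactSlot_castSucc_add_succ_comp_del D δ hD, ← Finset.add_sum_erase _ _ (Finset.mem_univ i)]
  congr 1
  exact Finset.sum_congr rfl fun q hq =>
    coactSlot_succAbove_comp_del D δ (Finset.ne_of_mem_erase hq)

theorem coact_comp_dCB (hD : tmulCoact δ ∘ₗ D = D.rTensor C ∘ₗ δ) (n : ℕ) :
    coact δ (n + 1) ∘ₗ dCB D n = (dCB D n).rTensor C ∘ₗ coact δ n := by
  calc coact δ (n + 1) ∘ₗ dCB D n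
      = ∑ i : Fin n, ((-1 : k) ^ (i : ℕ)) • (coact δ (n + 1) ∘ₗ del D i) := by
        simp only [dCB, ← LinearMap.comp_smul]
        exact map_sum (LinearMap.llcomp k _ _ _ (coact δ (n + 1))) _ _
    _ = ∑ i : Fin n, ((-1 : k) ^ (i : ℕ)) • ((del D i).rTensor C ∘ₗ coact δ n) := by
        simp only [coact_comp_del D δ hD]
    _ = (∑ i : Fin n, ((-1 : k) ^ (i : ℕ)) • (del D i).rTensor C) ∘ₗ coact δ n := by
        refine Eq.trans ?_ (map_sum (LinearMap.lcomp k _ (coact δ n)) _ _).symm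
        rfl
    _ = (dCB D n).rTensor C ∘ₗ coact δ n := by
        simp only [dCB, ← LinearMap.rTensor_smul]
        exact congrArg (· ∘ₗ coact δ n) (map_sum (LinearMap.rTensorHom C) _ _).symm

end

theorem statement_general (k : Type) [Field k]
    (C : Type) [AddCommGroup C] [Module k C]
    (Δ : C →ₗ[k] C ⊗[k] C)
    (hcoassoc : (TensorProduct.assoc k C C C).toLinearMap ∘ₗ
        (TensorProduct.map Δ LinearMap.id) ∘ₗ Δ
      = (TensorProduct.map LinearMap.id Δ) ∘ₗ Δ) :
    ∀ n : ℕ, coact (lieD Δ) (n + 1) ∘ₗ dCB Δ n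
      = (TensorProduct.map (dCB Δ n) LinearMap.id) ∘ₗ coact (lieD Δ) n :=
  coact_comp_dCB Δ (lieD Δ) (tmulCoact_comp_comul Δ hcoassoc)

theorem statement (k : Type) [Field k] [CharZero k]
    (C : Type) [AddCommGroup C] [Module k C]
    (Δ : C →ₗ[k] C ⊗[k] C) (η : C →ₗ[k] k)
    (hcoassoc : (TensorProduct.assoc k C C C).toLinearMap ∘ₗ
        (TensorProduct.map Δ LinearMap.id) ∘ₗ Δ
      = (TensorProduct.map LinearMap.id Δ) ∘ₗ Δ)
    (hcounitL : (TensorProduct.lid k C).toLinearMap ∘ₗ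
        (TensorProduct.map η LinearMap.id) ∘ₗ Δ = LinearMap.id)
    (hcounitR : (TensorProduct.rid k C).toLinearMap ∘ₗ
        (TensorProduct.map LinearMap.id η) ∘ₗ Δ = LinearMap.id) :
    ∀ n : ℕ, coact (lieD Δ) (n + 1) ∘ₗ dCB Δ n
      = (TensorProduct.map (dCB Δ n) LinearMap.id) ∘ₗ coact (lieD Δ) n :=
  statement_general k C Δ hcoassoc
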